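/- Let G_X = (V_X, E_X) be a finite graph and let x ∈ ℝ^{E_X} satisfy 0 < x_e < 1 for every e ∈ E_X. Let U ⊆ V_X and let C_1, …, C_ℓ be pairwise disjoint subsets of U such that Σ_{e∈E_X(U)} x_e = |U| − 1 and Σ_{e∈E_X(C_k)} x_e = |C_k| − 1 for every k ∈ {1, …, ℓ}, and such that the characteristic vectors χ(E_X(U)), χ(E_X(C_1)), …, χ(E_X(C_ℓ)) are linearly independent in ℝ^{E_X}. Then |E_X(U) \ ⋃_{k=1}^{ℓ} E_X(C_k)| ≥ 2. -/
import Mathlib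


open Finset

/-- The set `E_X(U)` of edges of `E_X` having both endpoints in `U`
(edges are given by an endpoint map `p`). -/
def edgesIn {V ε : Type*} [DecidableEq V] (p : ε → V × V)
    (EX : Finset ε) (U : Finset V) : Finset ε :=
  EX.filter fun e => (p e).1 ∈ U ∧ (p e).2 ∈ U

/-- The characteristic vector of a finset of edges. -/
def chi {ε : Type*} [DecidableEq ε] (S : Finset ε) : ε → ℝ :=
  fun e => if e ∈ S then 1 else 0

/-- If `0 < x_e < 1` for all `e ∈ E_X`, the sets `C_1, …, C_ℓ` are
pairwise disjoint subsets of `U`, the constraints for `U` and all `C_k` are tight, and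
the characteristic vectors `χ(E_X(U)), χ(E_X(C_1)), …, χ(E_X(C_ℓ))` are linearly
independent, then `|E_X(U) \ ⋃_k E_X(C_k)| ≥ 2`. -/
theorem tight_parent_has_two_private_edges {V ε : Type*}
    [Fintype V] [DecidableEq V] [DecidableEq ε]
    (p : ε → V × V) (EX : Finset ε) (x : ε → ℝ)
    (hx : ∀ e ∈ EX, 0 < x e ∧ x e < 1)
    (U : Finset V) (ℓ : ℕ) (C : Fin ℓ → Finset V)
    (hCU : ∀ k, C k ⊆ U)
    (hdisj : ∀ j k, j ≠ k → Disjoint (C j) (C k))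
    (hU : ∑ e ∈ edgesIn p EX U, x e = (U.card : ℝ) - 1)
    (hC : ∀ k, ∑ e ∈ edgesIn p EX (C k), x e = ((C k).card : ℝ) - 1)
    (hli : LinearIndependent ℝ
      (Fin.cons (chi (edgesIn p EX U)) (fun k => chi (edgesIn p EX (C k))) :
        Fin (ℓ + 1) → ε → ℝ)) :
    2 ≤ ((edgesIn p EX U) \ (Finset.univ.biUnion fun k => edgesIn p EX (C k))).card := by

  classical
  by_contra hlt
  push_neg at hlt
  set EU := edgesIn p EX U with hEUdef
  set B := (Finset.univ.biUnion fun k => edgesIn p EX (C k)) with hBdef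
  have hsubk : ∀ k, edgesIn p EX (C k) ⊆ EU := by
    intro k e he
    simp only [edgesIn, mem_filter, hEUdef] at he ⊢
    exact ⟨he.1, hCU k he.2.1, hCU k he.2.2⟩
  have hBsub : B ⊆ EU := by
    intro e he
    rcases Finset.mem_biUnion.mp he with ⟨k, _, hk⟩
    exact hsubk k hk
  have hedisj : ∀ j k : Fin ℓ, j ≠ k →
      Disjoint (edgesIn p EX (C j)) (edgesIn p EX (C k)) := by
    intro j k hjk
    refine Finset.disjoint_left.mpr ?_
    intro e hej hek
    simp only [edgesIn, mem_filter] at hej hek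
    exact (Finset.disjoint_left.mp (hdisj j k hjk)) hej.2.1 hek.2.1
  have hsumB : ∑ e ∈ B, x e = ∑ k : Fin ℓ, ∑ e ∈ edgesIn p EX (C k), x e := by
    exact Finset.sum_biUnion fun j _ k _ hjk => hedisj j k hjk
  have hsplit : ∑ e ∈ EU \ B, x e
      = (U.card : ℝ) - 1 - ∑ k : Fin ℓ, (((C k).card : ℝ) - 1) := by
    have h := Finset.sum_sdiff (f := x) hBsub
    have : ∑ e ∈ EU \ B, x e = (∑ e ∈ EU, x e) - ∑ e ∈ B, x e := by linarith
    rw [this, hU, hsumB]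
    congr 1
    exact Finset.sum_congr rfl fun k _ => hC k
  interval_cases h : (EU \ B).card
  · -- card = 0 : linear dependence
    have hempty : EU \ B = ∅ := Finset.card_eq_zero.mp h
    have hEB : EU = B := Finset.Subset.antisymm
      (Finset.sdiff_eq_empty_iff_subset.mp hempty) hBsub
    have hrel : ∑ i : Fin (ℓ + 1),
        ((Fin.cons (1 : ℝ) (fun _ => (-1 : ℝ)) : Fin (ℓ + 1) → ℝ) i) •
          ((Fin.cons (chi EU) (fun k => chi (edgesIn p EX (C k))) :
            Fin (ℓ + 1) → ε → ℝ) i) = 0 := by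
      rw [Fin.sum_univ_succ]
      simp only [Fin.cons_zero, Fin.cons_succ]
      funext e
      simp only [Pi.add_apply, Finset.sum_apply, Pi.smul_apply, smul_eq_mul,
        one_mul, neg_one_mul, Pi.zero_apply, chi]
      by_cases heB : e ∈ B
      · rcases Finset.mem_biUnion.mp heB with ⟨k0, _, hk0⟩
        have hEUe : e ∈ EU := hBsub heB
        rw [if_pos hEUe]
        have : ∑ k : Fin ℓ, -(if e ∈ edgesIn p EX (C k) then (1:ℝ) else 0)
            = -1 := by
          rw [Finset.sum_eq_single k0]
          · rw [if_pos hk0]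
          · intro k _ hk
            have : e ∉ edgesIn p EX (C k) := fun he =>
              (Finset.disjoint_left.mp (hedisj k k0 hk)) he hk0
            rw [if_neg this, neg_zero]
          · intro hk0'; exact absurd (Finset.mem_univ k0) hk0'
        rw [this]; ring
      · have hEUe : e ∉ EU := by rw [hEB]; exact heB
        rw [if_neg hEUe]
        have : ∀ k : Fin ℓ, e ∉ edgesIn p EX (C k) := fun k he =>
          heB (Finset.mem_biUnion.mpr ⟨k, Finset.mem_univ k, he⟩)
        simp [this]
    have h0 := Fintype.linearIndependent_iff.mp hli
      (Fin.cons (1 : ℝ) (fun _ => (-1 : ℝ))) hrel 0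
    simp at h0
  · -- card = 1 : an edge with integer value in (0,1)
    rcases Finset.card_eq_one.mp h with ⟨e0, he0⟩
    rw [he0, Finset.sum_singleton] at hsplit
    have he0EU : e0 ∈ EU := by
      have : e0 ∈ EU \ B := by rw [he0]; exact Finset.mem_singleton_self e0
      exact (Finset.mem_sdiff.mp this).1
    have he0EX : e0 ∈ EX := Finset.mem_filter.mp he0EU |>.1
    obtain ⟨hx0, hx1⟩ := hx e0 he0EX
    have hxint : x e0 = (((U.card : ℤ) - 1 - (∑ k : Fin ℓ, ((C k).card : ℤ) - ℓ) : ℤ) : ℝ) := by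
      rw [hsplit]
      push_cast
      rw [Finset.sum_sub_distrib]
      simp
    rw [hxint] at hx0 hx1
    have h1 : (0 : ℤ) < (U.card : ℤ) - 1 - (∑ k : Fin ℓ, ((C k).card : ℤ) - ℓ) := by
      exact_mod_cast hx0
    have h2 : (U.card : ℤ) - 1 - (∑ k : Fin ℓ, ((C k).card : ℤ) - ℓ) < 1 := by
      exact_mod_cast hx1
    omega
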